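/- Let X_1, …, X_k, Y be finite-dimensional Banach spaces and T a nonzero bounded k-linear map. Then T is smooth if and only if for every bounded k-linear map A, the set Ω'(T,A) := { y*(A x⃗) : x⃗ ∈ M_T, y* ∈ J(T x⃗) } is a singleton. -/

import Mathlib

/-!
Both directions go through norming pairs `(x, y)`, `x ∈ M_T`, `y ∈ J(T x)`, which exist by
compactness. If `T ⊥_B A`, then applying compactness to norming pairs of `T + t A` as `t ↓ 0`
gives a norming pair of `T` with `Re y(A x) ≥ 0`. So when `Ω'(T, A)` is a singleton `{v}` and
`T ⊥_B A`, replacing `A` by `c A` gives `Re (c v) ≥ 0` for every scalar `c`, hence `v = 0`;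
then a single norming pair `(x, y)` witnesses every orthogonality `T ⊥_B A` through
`y(A x) = 0`, and this condition is additive in `A`. Conversely, two norming pairs with
`y(A x) = a ≠ b = y'(A x')` produce the directions `‖T‖ A - a T` and `b T - ‖T‖ A`,
both orthogonal to `T`, whose sum `(b - a) T` is not.
-/

open Set RCLike Filter Metric ComplexConjugate

theorem IsCompact.exists_eq_and_nonneg_of_le_add_mul {Z : Type*} [TopologicalSpace Z]
    {K : Set Z} (hK : IsCompact K) {f g : Z → ℝ} (hf : Continuous f) (hg : Continuous g)
    {M : ℝ} (hfM : ∀ z ∈ K, f z ≤ M) (h : ∀ t : ℝ, 0 < t → ∃ z ∈ K, M ≤ f z + t * g z) :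
    ∃ z ∈ K, f z = M ∧ 0 ≤ g z := by
  have hg_nonneg {z t} (hz : z ∈ K) (ht : 0 < t) (hMt : M ≤ f z + t * g z) : 0 ≤ g z :=
    nonneg_of_mul_nonneg_right (by linarith [hfM z hz]) ht
  -- `g ≥ 0` on `K ∩ {M ≤ f + t * g}`, so these sets shrink as `t` decreases
  obtain ⟨z, hzK, hz⟩ := hK.inter_iInter_nonempty
    (fun n : ℕ => {z | M ≤ f z + 1 / (n + 1) * g z})
    (fun n => isClosed_le continuous_const (hf.add (continuous_const.mul hg))) fun u => by
      obtain ⟨N, hN⟩ := u.exists_le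
      obtain ⟨z, hzK, hz⟩ := h (1 / (N + 1)) Nat.one_div_pos_of_nat
      refine ⟨z, hzK, mem_iInter₂.2 fun n hn => ?_⟩
      have htn : 1 / ((N : ℝ) + 1) ≤ 1 / ((n : ℝ) + 1) := Nat.one_div_le_one_div (hN n hn)
      have hgz := hg_nonneg hzK Nat.one_div_pos_of_nat hz
      change M ≤ f z + 1 / (n + 1) * g z
      nlinarith
  simp only [mem_iInter] at hz
  refine ⟨z, hzK, le_antisymm (hfM z hzK) (ge_of_tendsto' (x := atTop) ?_ hz),
    hg_nonneg hzK one_pos (by simpa using hz 0)⟩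
  simpa using tendsto_const_nhds.add (tendsto_one_div_add_atTop_nhds_zero_nat.mul_const (g z))

section Birkhoff

variable (𝕜 : Type*) {E : Type*} [NormedField 𝕜] [NormedAddCommGroup E] [NormedSpace 𝕜 E]

def BirkhoffOrthogonal (x y : E) : Prop :=
  ∀ lam : 𝕜, ‖x‖ ≤ ‖x + lam • y‖

def IsSmoothPoint (x : E) : Prop :=
  ∀ y z : E, BirkhoffOrthogonal 𝕜 x y → BirkhoffOrthogonal 𝕜 x z →
    BirkhoffOrthogonal 𝕜 x (y + z)

variable {𝕜} {x y : E}

theorem BirkhoffOrthogonal.smul_right (h : BirkhoffOrthogonal 𝕜 x y) (c : 𝕜) :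
    BirkhoffOrthogonal 𝕜 x (c • y) := fun lam => by
  simpa only [smul_smul] using h (lam * c)

theorem not_birkhoffOrthogonal_smul_self (hx : x ≠ 0) {c : 𝕜} (hc : c ≠ 0) :
    ¬BirkhoffOrthogonal 𝕜 x (c • x) := fun h => by
  have := h (-c⁻¹)
  rw [smul_smul, neg_mul, inv_mul_cancel₀ hc, neg_one_smul, add_neg_cancel, norm_zero] at this
  exact hx (norm_le_zero_iff.1 this)

end Birkhoff

theorem RCLike.eq_zero_of_forall_re_mul_nonneg {𝕜 : Type*} [RCLike 𝕜] {z : 𝕜}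
    (h : ∀ c : 𝕜, 0 ≤ re (c * z)) : z = 0 := by
  have := h (-conj z)
  rw [neg_mul, map_neg, conj_mul, ← ofReal_pow, ofReal_re, neg_nonneg] at this
  exact norm_eq_zero.1 (pow_eq_zero_iff two_ne_zero |>.1 (le_antisymm this (sq_nonneg _)))

namespace ContinuousMultilinearMap

variable {𝕜 : Type*} [RCLike 𝕜] {ι : Type*} {X : ι → Type*}
  [∀ i, NormedAddCommGroup (X i)] [∀ i, NormedSpace 𝕜 (X i)]
  {Y : Type*} [NormedAddCommGroup Y] [NormedSpace 𝕜 Y]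

theorem nontrivial_of_ne_zero {T : ContinuousMultilinearMap 𝕜 X Y} (hT : T ≠ 0) (i : ι) :
    Nontrivial (X i) := by
  by_contra h
  rw [not_nontrivial_iff_subsingleton] at h
  exact hT (ext fun m => T.map_coord_zero i (Subsingleton.elim _ _))

variable [Fintype ι]

theorem opNorm_le_of_forall_norm_eq_one (T : ContinuousMultilinearMap 𝕜 X Y) {C : ℝ}
    (hC : 0 ≤ C) (h : ∀ x : ∀ i, X i, (∀ i, ‖x i‖ = 1) → ‖T x‖ ≤ C) : ‖T‖ ≤ C := by
  refine opNorm_le_bound hC fun m => ?_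
  by_cases hm : ∃ i, m i = 0
  · obtain ⟨i, hi⟩ := hm
    rw [T.map_coord_zero i hi, norm_zero]
    exact mul_nonneg hC (Finset.prod_nonneg fun i _ => norm_nonneg _)
  push Not at hm
  have hu : ∀ i, ‖(‖m i‖ : 𝕜)⁻¹ • m i‖ = 1 := fun i => norm_smul_inv_norm (hm i)
  have hTm : T m = (∏ i, (‖m i‖ : 𝕜)) • T fun i => (‖m i‖ : 𝕜)⁻¹ • m i := by
    rw [← T.map_smul_univ]
    congr 1
    ext i
    rw [smul_smul, mul_inv_cancel₀ (ofReal_ne_zero.2 (norm_ne_zero_iff.2 (hm i))), one_smul]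
  have hprod : 0 ≤ ∏ i, ‖m i‖ := Finset.prod_nonneg fun i _ => norm_nonneg _
  rw [hTm, norm_smul, ← ofReal_prod, norm_ofReal, abs_of_nonneg hprod, mul_comm]
  exact mul_le_mul_of_nonneg_right (h _ hu) hprod

theorem exists_norm_apply_eq_opNorm [∀ i, Nontrivial (X i)] [∀ i, FiniteDimensional 𝕜 (X i)]
    (T : ContinuousMultilinearMap 𝕜 X Y) : ∃ x : ∀ i, X i, (∀ i, ‖x i‖ = 1) ∧ ‖T x‖ = ‖T‖ := by
  have := fun i => FiniteDimensional.proper_rclike 𝕜 (X i)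
  have hK : IsCompact (univ.pi fun i => sphere (0 : X i) 1) :=
    isCompact_univ_pi fun i => isCompact_sphere 0 1
  have hne : (univ.pi fun i => sphere (0 : X i) 1).Nonempty :=
    univ_pi_nonempty_iff.2 fun i =>
      nonempty_coe_sort.1 (NormedSpace.sphere_nonempty_rclike 𝕜 zero_le_one)
  obtain ⟨x, hx, hmax⟩ := hK.exists_isMaxOn hne T.cont.norm.continuousOn
  have hx : ∀ i, ‖x i‖ = 1 := fun i => mem_sphere_zero_iff_norm.1 (hx i (mem_univ i))
  refine ⟨x, hx, le_antisymm ?_ (T.opNorm_le_of_forall_norm_eq_one (norm_nonneg _) fun u hu => ?_)⟩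
  · simpa [hx] using T.le_opNorm x
  · exact hmax fun i _ => mem_sphere_zero_iff_norm.2 (hu i)

theorem norm_dual_apply_le (B : ContinuousMultilinearMap 𝕜 X Y) {x : ∀ i, X i}
    {y : Y →L[𝕜] 𝕜} (hx : ∀ i, ‖x i‖ = 1) (hy : ‖y‖ ≤ 1) : ‖y (B x)‖ ≤ ‖B‖ :=
  calc ‖y (B x)‖ ≤ ‖y‖ * ‖B x‖ := y.le_opNorm _
    _ ≤ 1 * (‖B‖ * ∏ i, ‖x i‖) := by gcongr; exact B.le_opNorm x
    _ = ‖B‖ := by simp [hx]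

/-- The pairs `(x, y)` with `x ∈ M_T` and `y ∈ J(T x)`. -/
def normingPairs (T : ContinuousMultilinearMap 𝕜 X Y) : Set ((∀ i, X i) × (Y →L[𝕜] 𝕜)) :=
  {p | (∀ i, ‖p.1 i‖ = 1) ∧ ‖T p.1‖ = ‖T‖ ∧ ‖p.2‖ = 1 ∧ p.2 (T p.1) = ‖T p.1‖}

/-- The set `Ω'(T, A)`. -/
def normingValues (T A : ContinuousMultilinearMap 𝕜 X Y) : Set 𝕜 :=
  (fun p => p.2 (A p.1)) '' normingPairs T

variable {T A : ContinuousMultilinearMap 𝕜 X Y} {p : (∀ i, X i) × (Y →L[𝕜] 𝕜)}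

theorem normingValues_eq_setOf :
    normingValues T A = {v : 𝕜 | ∃ (x : ∀ i, X i) (y : Y →L[𝕜] 𝕜),
      (∀ i, ‖x i‖ = 1) ∧ ‖T x‖ = ‖T‖ ∧ ‖y‖ = 1 ∧ y (T x) = (‖T x‖ : 𝕜) ∧ v = y (A x)} := by
  ext v
  simp [normingValues, normingPairs, eq_comm, and_assoc]

theorem dual_apply_eq_norm_of_mem_normingPairs (hp : p ∈ normingPairs T) :
    p.2 (T p.1) = ‖T‖ := by
  rw [hp.2.2.2, hp.2.1]

theorem normingPairs_nonempty [∀ i, FiniteDimensional 𝕜 (X i)] (hT : T ≠ 0) :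
    (normingPairs T).Nonempty := by
  have := nontrivial_of_ne_zero hT
  obtain ⟨x, hx, hTx⟩ := T.exists_norm_apply_eq_opNorm
  have hTx0 : ‖T x‖ ≠ 0 := by rwa [hTx, norm_ne_zero_iff]
  obtain ⟨y, hy, hyTx⟩ := exists_dual_vector 𝕜 (T x) hTx0
  exact ⟨(x, y), hx, hTx, hy, hyTx⟩

theorem mem_normingPairs_of_le_re (hx : ∀ i, ‖p.1 i‖ = 1) (hy : ‖p.2‖ = 1)
    (h : ‖T‖ ≤ re (p.2 (T p.1))) : p ∈ normingPairs T := by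
  have h₁ : ‖p.2 (T p.1)‖ ≤ re (p.2 (T p.1)) := (T.norm_dual_apply_le hx hy.le).trans h
  have h₂ : ‖p.2 (T p.1)‖ ≤ ‖T p.1‖ := by simpa [hy] using p.2.le_opNorm (T p.1)
  have h₃ : ‖T p.1‖ ≤ ‖T‖ := by simpa [hx] using T.le_opNorm p.1
  have h₄ := re_le_norm (p.2 (T p.1))
  have hTx : ‖T p.1‖ = ‖T‖ := by linarith
  refine ⟨hx, hTx, hy, ?_⟩
  rw [← re_eq_self_of_le h₁]
  congr 1
  linarith

theorem birkhoffOrthogonal_of_mem_normingPairs (hp : p ∈ normingPairs T)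
    (hA : p.2 (A p.1) = 0) : BirkhoffOrthogonal 𝕜 T A := fun lam =>
  calc ‖T‖ = ‖p.2 ((T + lam • A) p.1)‖ := by
        simp [dual_apply_eq_norm_of_mem_normingPairs hp, hA]
    _ ≤ ‖T + lam • A‖ := norm_dual_apply_le _ hp.1 hp.2.2.1.le

theorem exists_mem_normingPairs_re_nonneg [∀ i, FiniteDimensional 𝕜 (X i)]
    [FiniteDimensional 𝕜 Y] (hT : T ≠ 0) (hA : BirkhoffOrthogonal 𝕜 T A) :
    ∃ p ∈ normingPairs T, 0 ≤ re (p.2 (A p.1)) := by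
  have := fun i => FiniteDimensional.proper_rclike 𝕜 (X i)
  have := FiniteDimensional.proper_rclike 𝕜 (Y →L[𝕜] 𝕜)
  set K := (univ.pi fun i => sphere (0 : X i) 1) ×ˢ sphere (0 : Y →L[𝕜] 𝕜) 1
  have hK : IsCompact K :=
    (isCompact_univ_pi fun i => isCompact_sphere 0 1).prod (isCompact_sphere 0 1)
  have hmemK {p} : p ∈ K ↔ (∀ i, ‖p.1 i‖ = 1) ∧ ‖p.2‖ = 1 := by simp [K]
  obtain ⟨p, hpK, hpT, hpA⟩ := hK.exists_eq_and_nonneg_of_le_add_mul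
    (f := fun p => re (p.2 (T p.1))) (g := fun p => re (p.2 (A p.1)))
    (by fun_prop) (by fun_prop)
    (fun p hp => (re_le_norm _).trans (T.norm_dual_apply_le (hmemK.1 hp).1 (hmemK.1 hp).2.le))
    fun t ht => by
      have hTt : T + (t : 𝕜) • A ≠ 0 := by
        rw [← norm_pos_iff]; exact (norm_pos_iff.2 hT).trans_le (hA t)
      obtain ⟨q, hq⟩ := normingPairs_nonempty hTt
      refine ⟨q, hmemK.2 ⟨hq.1, hq.2.2.1⟩, ?_⟩
      have := congrArg re (dual_apply_eq_norm_of_mem_normingPairs hq)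
      simp only [add_apply, smul_apply, map_add, map_smul, smul_eq_mul, re_ofReal_mul,
        ofReal_re] at this
      exact this ▸ hA t
  exact ⟨p, mem_normingPairs_of_le_re (hmemK.1 hpK).1 (hmemK.1 hpK).2 hpT.ge, hpA⟩

theorem eq_zero_of_mem_normingValues [∀ i, FiniteDimensional 𝕜 (X i)] [FiniteDimensional 𝕜 Y]
    (hT : T ≠ 0) (hA : BirkhoffOrthogonal 𝕜 T A) (hsub : (normingValues T A).Subsingleton)
    {v : 𝕜} (hv : v ∈ normingValues T A) : v = 0 := by
  refine eq_zero_of_forall_re_mul_nonneg fun c => ?_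
  obtain ⟨p, hp, hre⟩ := exists_mem_normingPairs_re_nonneg hT (hA.smul_right c)
  have hpv : p.2 (A p.1) = v := hsub ⟨p, hp, rfl⟩ hv
  rwa [smul_apply, map_smul, smul_eq_mul, hpv] at hre

theorem subsingleton_normingValues_of_isSmoothPoint (hT : T ≠ 0) (hs : IsSmoothPoint 𝕜 T)
    (A : ContinuousMultilinearMap 𝕜 X Y) : (normingValues T A).Subsingleton := by
  rintro _ ⟨p, hp, rfl⟩ _ ⟨q, hq, rfl⟩
  by_contra hne
  -- `T ⊥_B (‖T‖ A - a T)` and `T ⊥_B (b T - ‖T‖ A)`, but their sum is `(b - a) T`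
  have h₁ : BirkhoffOrthogonal 𝕜 T ((‖T‖ : 𝕜) • A - p.2 (A p.1) • T) :=
    birkhoffOrthogonal_of_mem_normingPairs hp <| by
      simp [dual_apply_eq_norm_of_mem_normingPairs hp, mul_comm]
  have h₂ : BirkhoffOrthogonal 𝕜 T (q.2 (A q.1) • T - (‖T‖ : 𝕜) • A) :=
    birkhoffOrthogonal_of_mem_normingPairs hq <| by
      simp [dual_apply_eq_norm_of_mem_normingPairs hq, mul_comm]
  refine not_birkhoffOrthogonal_smul_self hT (sub_ne_zero.2 (Ne.symm hne)) ?_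
  convert hs _ _ h₁ h₂ using 1
  module

theorem isSmoothPoint_of_subsingleton_normingValues [∀ i, FiniteDimensional 𝕜 (X i)]
    [FiniteDimensional 𝕜 Y] (hT : T ≠ 0) (h : ∀ A, (normingValues T A).Subsingleton) :
    IsSmoothPoint 𝕜 T := by
  obtain ⟨p, hp⟩ := normingPairs_nonempty hT
  have hzero {A} (hA : BirkhoffOrthogonal 𝕜 T A) : p.2 (A p.1) = 0 :=
    eq_zero_of_mem_normingValues hT hA (h A) ⟨p, hp, rfl⟩
  intro A₁ A₂ h₁ h₂
  exact birkhoffOrthogonal_of_mem_normingPairs hp (by simp [hzero h₁, hzero h₂])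

end ContinuousMultilinearMap

theorem stmt19 {𝕜 : Type*} [RCLike 𝕜] {k : ℕ} {X : Fin k → Type*}
    [∀ i, NormedAddCommGroup (X i)] [∀ i, NormedSpace 𝕜 (X i)]
    [∀ i, FiniteDimensional 𝕜 (X i)]
    {Y : Type*} [NormedAddCommGroup Y] [NormedSpace 𝕜 Y] [FiniteDimensional 𝕜 Y]
    (T : ContinuousMultilinearMap 𝕜 X Y) (hT : T ≠ 0) :
    (∀ A₁ A₂ : ContinuousMultilinearMap 𝕜 X Y,
      (∀ lam : 𝕜, ‖T‖ ≤ ‖T + lam • A₁‖) → (∀ lam : 𝕜, ‖T‖ ≤ ‖T + lam • A₂‖) →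
      (∀ lam : 𝕜, ‖T‖ ≤ ‖T + lam • (A₁ + A₂)‖)) ↔
    (∀ A : ContinuousMultilinearMap 𝕜 X Y, ∃ lam₀ : 𝕜,
      {lam : 𝕜 | ∃ (x : ∀ i, X i) (y : Y →L[𝕜] 𝕜),
        (∀ i, ‖x i‖ = 1) ∧ ‖T x‖ = ‖T‖ ∧ ‖y‖ = 1 ∧
        y (T x) = (‖T x‖ : 𝕜) ∧ lam = y (A x)} = {lam₀}) := by
  change IsSmoothPoint 𝕜 T ↔ _
  simp only [← ContinuousMultilinearMap.normingValues_eq_setOf,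
    exists_eq_singleton_iff_nonempty_subsingleton]
  exact ⟨fun hs A => ⟨(ContinuousMultilinearMap.normingPairs_nonempty hT).image _,
      ContinuousMultilinearMap.subsingleton_normingValues_of_isSmoothPoint hT hs A⟩,
    fun h => ContinuousMultilinearMap.isSmoothPoint_of_subsingleton_normingValues hT
      fun A => (h A).2⟩
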